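/- The canonical map ι : X → 𝔓ᵤ(X), ι(x) = {x}, is a topological embedding with respect to the D-topologies. In particular, for every D-open O ⊆ X, the set O' = {A ∈ 𝔓(X) : A ∩ O ≠ ∅} is D-open in the union power space and ι(O) = ι(X) ∩ O'. -/

import Mathlib

open Set Function

universe u

/-- A diffeology on a set `X`, encoded via total functions on `Fin n → ℝ`
together with a designated open domain `U`. -/
structure DiffeologyPlots (X : Type u) where
  IsPlot : (n : ℕ) → Set (Fin n → ℝ) → ((Fin n → ℝ) → X) → Prop
  isOpen_of_isPlot : ∀ {n : ℕ} {U : Set (Fin n → ℝ)} {P : (Fin n → ℝ) → X},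
    IsPlot n U P → IsOpen U
  const_isPlot : ∀ (n : ℕ) (U : Set (Fin n → ℝ)), IsOpen U → ∀ x : X,
    IsPlot n U (fun _ => x)
  locality : ∀ {n : ℕ} {U : Set (Fin n → ℝ)} {P : (Fin n → ℝ) → X}, IsOpen U →
    (∀ r ∈ U, ∃ V, IsOpen V ∧ r ∈ V ∧ V ⊆ U ∧ IsPlot n V P) → IsPlot n U P
  smooth_comp : ∀ {n m : ℕ} {U : Set (Fin n → ℝ)} {P : (Fin n → ℝ) → X}
    {V : Set (Fin m → ℝ)} {F : (Fin m → ℝ) → (Fin n → ℝ)},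
    IsPlot n U P → IsOpen V → ContDiffOn ℝ (⊤ : ℕ∞) F V → Set.MapsTo F V U →
    IsPlot m V (P ∘ F)
  plot_congr : ∀ {n : ℕ} {U : Set (Fin n → ℝ)} {P Q : (Fin n → ℝ) → X},
    IsPlot n U P → Set.EqOn P Q U → IsPlot n U Q

/-- The UPD property: `P : U → 𝔓(X)` admits local implicit plots through every point of
every value, where plots of `X` are given by the predicate `Pl`. This characterizes the
plots of the union power set diffeology. -/
def UPDProp {X : Type u} (Pl : (n : ℕ) → Set (Fin n → ℝ) → ((Fin n → ℝ) → X) → Prop)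
    (n : ℕ) (U : Set (Fin n → ℝ)) (P : (Fin n → ℝ) → Set X) : Prop :=
  IsOpen U ∧ ∀ r₀ ∈ U, ∀ x₀ ∈ P r₀,
    ∃ (V : Set (Fin n → ℝ)) (σ : (Fin n → ℝ) → X),
      IsOpen V ∧ r₀ ∈ V ∧ V ⊆ U ∧ Pl n V σ ∧ σ r₀ = x₀ ∧ ∀ r ∈ V, σ r ∈ P r

/-- The D-topology: a set is D-open iff its preimage by every plot is open. -/
def DOpen {X : Type u} (D : DiffeologyPlots X) (O : Set X) : Prop :=
  ∀ (n : ℕ) (U : Set (Fin n → ℝ)) (P : (Fin n → ℝ) → X),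
    D.IsPlot n U P → IsOpen {r ∈ U | P r ∈ O}

/-- D-open sets of the union power space `𝔓ᵤ(X)`. -/
def DOpenU {X : Type u} (D : DiffeologyPlots X) (O' : Set (Set X)) : Prop :=
  ∀ (n : ℕ) (U : Set (Fin n → ℝ)) (P : (Fin n → ℝ) → Set X),
    UPDProp D.IsPlot n U P → IsOpen {r ∈ U | P r ∈ O'}

open Topology

/-! `ι` is D-continuous because `r ↦ {P r}` is a UPD plot for every plot `P`, with `P` itself as
the implicit plot through each point. It is open onto its image because `ι(O) = ι(X) ∩ O'` and `O'`
is D-open by lower semicontinuity of UPD plots: if `x₀ ∈ P r₀ ∩ O`, the implicit plot `σ` through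
`x₀` pulls `O` back to a neighbourhood of `r₀` on which `σ r ∈ P r ∩ O`. -/

theorem DiffeologyPlots.updProp_singleton {X : Type u} (D : DiffeologyPlots X) {n : ℕ}
    {U : Set (Fin n → ℝ)} {P : (Fin n → ℝ) → X} (hP : D.IsPlot n U P) :
    UPDProp D.IsPlot n U (fun r => {P r}) :=
  ⟨D.isOpen_of_isPlot hP, fun _ hr₀ _ hx₀ =>
    ⟨U, P, D.isOpen_of_isPlot hP, hr₀, subset_rfl, hP, (mem_singleton_iff.mp hx₀).symm,
      fun _ _ => rfl⟩⟩

theorem DOpenU.dOpen_setOf_singleton_mem {X : Type u} {D : DiffeologyPlots X}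
    {O' : Set (Set X)} (hO' : DOpenU D O') : DOpen D {x : X | ({x} : Set X) ∈ O'} :=
  fun n U _ hP => hO' n U _ (D.updProp_singleton hP)

theorem UPDProp.isOpen_setOf_inter_nonempty {X : Type u} {D : DiffeologyPlots X} {n : ℕ}
    {U : Set (Fin n → ℝ)} {P : (Fin n → ℝ) → Set X} (hP : UPDProp D.IsPlot n U P)
    {O : Set X} (hO : DOpen D O) : IsOpen {r ∈ U | (P r ∩ O).Nonempty} := by
  rw [isOpen_iff_mem_nhds]
  rintro r₀ ⟨hr₀, x₀, hx₀P, hx₀O⟩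
  obtain ⟨V, σ, -, hr₀V, hVU, hσ, rfl, hσP⟩ := hP.2 r₀ hr₀ x₀ hx₀P
  have hσO : {r ∈ V | σ r ∈ O} ∈ 𝓝 r₀ := (hO n V σ hσ).mem_nhds ⟨hr₀V, hx₀O⟩
  filter_upwards [hσO] with r ⟨hrV, hrO⟩
  exact ⟨hVU hrV, σ r, hσP r hrV, hrO⟩

theorem DOpen.dOpenU_setOf_inter_nonempty {X : Type u} {D : DiffeologyPlots X} {O : Set X}
    (hO : DOpen D O) : DOpenU D {A : Set X | (A ∩ O).Nonempty} :=
  fun _ _ _ hP => hP.isOpen_setOf_inter_nonempty hO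

theorem Set.image_singleton_eq_range_inter_setOf_inter_nonempty {X : Type u} (O : Set X) :
    (fun x : X => ({x} : Set X)) '' O =
      range (fun x : X => ({x} : Set X)) ∩ {A : Set X | (A ∩ O).Nonempty} := by
  ext A
  constructor
  · rintro ⟨x, hx, rfl⟩
    exact ⟨⟨x, rfl⟩, x, rfl, hx⟩
  · rintro ⟨⟨x, rfl⟩, y, rfl, hyO⟩
    exact ⟨y, hyO, rfl⟩

/-- `ι : X → 𝔓ᵤ(X)`, `ι x = {x}`, is a topological embedding for the
D-topologies: it is injective, D-continuous, and for every D-open `O ⊆ X` the set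
`O' = {A : A ∩ O ≠ ∅}` is D-open in `𝔓ᵤ(X)` with `ι(O) = ι(X) ∩ O'`. -/
theorem singleton_map_D_embedding {X : Type u} (D : DiffeologyPlots X) :
    Function.Injective (fun x : X => ({x} : Set X)) ∧
    (∀ O' : Set (Set X), DOpenU D O' → DOpen D {x : X | ({x} : Set X) ∈ O'}) ∧
    (∀ O : Set X, DOpen D O →
      DOpenU D {A : Set X | (A ∩ O).Nonempty} ∧
      (fun x : X => ({x} : Set X)) '' O =
        Set.range (fun x : X => ({x} : Set X)) ∩ {A : Set X | (A ∩ O).Nonempty}) :=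
  ⟨singleton_injective, fun _ hO' => hO'.dOpen_setOf_singleton_mem,
    fun O hO =>
      ⟨hO.dOpenU_setOf_inter_nonempty, image_singleton_eq_range_inter_setOf_inter_nonempty O⟩⟩
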